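/- Assume f satisfies hypothesis (KPP) with constant Z > 0. Let w be the (nonnegative) classical solution of ∂_t u = Δu + f(t,u) with nonnegative, continuous, compactly supported, not identically zero initial datum w₀, and let u be the classical solution with initial datum u₀(x) = w₀(x) + w₀(x+ξ), where ξ ∈ ℝ^N \ {0}. Fix t > 0, θ ∈ (0,Z), L > 0 and a unit vector η ∈ ℝ^N with η·ξ = 0, and suppose that w(t,x) ≤ θ/2 for all x with |x| ≥ L. Then the upper level set U_θ(t) of u is contained in the slab {x ∈ ℝ^N : |x·η| < L}, and consequently ℛ^i_θ(t) ≤ L. -/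

import Mathlib

open Filter Metric Set
open scoped ENNReal NNReal

/-- The Laplacian of a function on Euclidean space, as the sum of second partial
derivatives in the coordinate directions. -/
noncomputable def laplacian {N : ℕ} (φ : EuclideanSpace ℝ (Fin N) → ℝ)
    (x : EuclideanSpace ℝ (Fin N)) : ℝ :=
  ∑ i : Fin N, fderiv ℝ (fun y => fderiv ℝ φ y (EuclideanSpace.single i (1:ℝ))) x
    (EuclideanSpace.single i (1:ℝ))

/-- Standing assumptions: `f (t, z)` is Hölder continuous in `t`, Lipschitz continuous
in `z` uniformly in `t`, and `f (t, 0) = 0` for all `t > 0`. -/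
def StandingAssumptions (f : ℝ → ℝ → ℝ) : Prop :=
  (∃ a : ℝ, 0 < a ∧ a ≤ 1 ∧ ∃ C : ℝ, ∀ z : ℝ, ∀ t ∈ Set.Ioi (0:ℝ), ∀ s ∈ Set.Ioi (0:ℝ),
    |f t z - f s z| ≤ C * |t - s| ^ a) ∧
  (∃ L : ℝ≥0, ∀ t > (0:ℝ), LipschitzWith L (fun z => f t z)) ∧
  (∀ t > (0:ℝ), f t 0 = 0)

/-- A classical solution of `∂ₜ u = Δu + f(t,u)` on `(0,∞) × ℝᴺ` with initial datum `u₀`: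
continuous on `[0,∞) × ℝᴺ`, bounded on `[0,T] × ℝᴺ` for every `T > 0`, `C¹` in `t` and
`C²` in `x` for `t > 0`, satisfying the equation pointwise for `t > 0`, and `u(0,·) = u₀`. -/
structure IsClassicalSolution {N : ℕ} (f : ℝ → ℝ → ℝ)
    (u : ℝ → EuclideanSpace ℝ (Fin N) → ℝ)
    (u₀ : EuclideanSpace ℝ (Fin N) → ℝ) : Prop where
  cont : ContinuousOn (Function.uncurry u)
    (Set.Ici (0:ℝ) ×ˢ (Set.univ : Set (EuclideanSpace ℝ (Fin N))))
  bounded : ∀ T > (0:ℝ), ∃ C : ℝ, ∀ t ∈ Set.Icc (0:ℝ) T, ∀ x, |u t x| ≤ C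
  time_diff : ∀ x, ∀ t > (0:ℝ), DifferentiableAt ℝ (fun s => u s x) t
  space_smooth : ∀ t > (0:ℝ), ContDiff ℝ 2 (u t)
  eqn : ∀ t > (0:ℝ), ∀ x, deriv (fun s => u s x) t = laplacian (u t) x + f t (u t x)
  init : u 0 = u₀

/-- Invasion property with level `Z ∈ (0, +∞]`: for every compact `K`,
`liminf_{t→∞} min_{x ∈ K} u (t, x) ≥ Z`, i.e. for every real `z` (strictly) below `Z`,
eventually `u (t, ·) ≥ z` on `K`. -/
def Invades {N : ℕ} (u : ℝ → EuclideanSpace ℝ (Fin N) → ℝ) (Z : ℝ≥0∞) : Prop :=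
  ∀ z : ℝ, ENNReal.ofReal z < Z →
    ∀ K : Set (EuclideanSpace ℝ (Fin N)), IsCompact K →
      ∃ t₀ : ℝ, ∀ t ≥ t₀, ∀ x ∈ K, z ≤ u t x

/-- The upper level set `U_θ(t) = {x : u (t, x) > θ}`. -/
def upperLevelSet {N : ℕ} (u : ℝ → EuclideanSpace ℝ (Fin N) → ℝ) (θ t : ℝ) :
    Set (EuclideanSpace ℝ (Fin N)) := {x | θ < u t x}

/-- The inner radius `ℛⁱ_θ(t)`: the supremum of radii of balls contained in the upper
level set `U_θ(t)`. -/
noncomputable def innerRadius {N : ℕ} (u : ℝ → EuclideanSpace ℝ (Fin N) → ℝ)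
    (θ t : ℝ) : ℝ :=
  sSup {r : ℝ | ∃ x₀, ∀ x ∈ Metric.ball x₀ r, θ < u t x}

/-- The outer radius `ℛᵉ_θ(t)`: the infimum of radii of balls containing the upper
level set `U_θ(t)`. -/
noncomputable def outerRadius {N : ℕ} (u : ℝ → EuclideanSpace ℝ (Fin N) → ℝ)
    (θ t : ℝ) : ℝ :=
  sInf {r : ℝ | 0 < r ∧ ∃ x₀, ∀ x ∉ Metric.ball x₀ r, u t x ≤ θ}

/-- The centered inscribed radius `r_θ(t)`: the supremum of radii `r` such that
`u (t, ·) > θ` on the centered ball `B_r(0)` (equal to `0` if no positive `r` works). -/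
noncomputable def centeredRadius {N : ℕ} (u : ℝ → EuclideanSpace ℝ (Fin N) → ℝ)
    (θ t : ℝ) : ℝ :=
  sSup {r : ℝ | ∀ x : EuclideanSpace ℝ (Fin N), ‖x‖ < r → θ < u t x}

/-- Hypothesis (f≥g): `f(t,z) ≥ g(z)` with `g` continuous, `g ≤ 0` on `(0,θ₀)`,
`g > 0` on `(θ₀,Z)` and `∫₀^Z g > 0`. -/
def HypFG (f : ℝ → ℝ → ℝ) (g : ℝ → ℝ) (θ₀ Z : ℝ) : Prop :=
  ContinuousOn g (Set.Ici 0) ∧ (∀ t ≥ (0:ℝ), ∀ z ≥ (0:ℝ), g z ≤ f t z) ∧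
  0 < θ₀ ∧ θ₀ < Z ∧ (∀ z ∈ Set.Ioo 0 θ₀, g z ≤ 0) ∧ (∀ z ∈ Set.Ioo θ₀ Z, 0 < g z) ∧
  0 < ∫ z in (0:ℝ)..Z, g z

/-- Hypothesis (KPP): `inf_{t>0} f(t,z) > 0` for every `z ∈ (0,Z)` and
`z ↦ f(t,z)/z` is nonincreasing on `(0,∞)` for every `t > 0`. -/
def HypKPP (f : ℝ → ℝ → ℝ) (Z : ℝ) : Prop :=
  0 < Z ∧ (∀ z ∈ Set.Ioo 0 Z, ∃ ε > (0:ℝ), ∀ t > (0:ℝ), ε ≤ f t z) ∧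
  (∀ t > (0:ℝ), AntitoneOn (fun z => f t z / z) (Set.Ioi 0))

/-!
Under (KPP) the map `z ↦ f(t, z)` is subadditive on `[0, ∞)`, so `w(t, x) + w(t, x + ξ)`, a sum of
two nonnegative solutions, is a supersolution, and the parabolic maximum principle applied to
`u - w - w(· + ξ)` gives `u ≤ w + w(· + ξ)`. Because `η ⊥ ξ`, every `x` with `|x · η| ≥ L` has
`|x| ≥ L` and `|x + ξ| ≥ L`, where `w(t, ·) ≤ θ / 2`; hence `u(t, x) ≤ θ` there. A ball inside the
slab `{|x · η| < L}` has radius at most `L`.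
-/

open scoped Laplacian Topology
open Function Module Real

theorem IsMaxOn.deriv_nonneg_of_Icc {g : ℝ → ℝ} {a b : ℝ} (h : IsMaxOn g (Icc a b) b)
    (hab : a < b) (hg : DifferentiableAt ℝ g b) : 0 ≤ deriv g b := by
  have hcone : a - b ∈ posTangentConeAt (Icc a b) b :=
    sub_mem_posTangentConeAt_of_segment_subset
      ((segment_symm ℝ b a).le.trans (segment_subset_Icc hab.le))
  have := h.localize.hasFDerivWithinAt_nonpos hg.hasDerivAt.hasDerivWithinAt.hasFDerivWithinAt hcone
  simp only [ContinuousLinearMap.toSpanSingleton_apply, smul_eq_mul] at this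
  nlinarith

theorem IsLocalMax.deriv_deriv_nonpos {g : ℝ → ℝ} {a : ℝ} (h : IsLocalMax g a)
    (hc : ContinuousAt g a) : deriv (deriv g) a ≤ 0 := by
  by_contra! hpos
  -- the second-derivative test makes `a` also a local minimum, so `g` is locally constant
  have hconst : g =ᶠ[𝓝 a] fun _ => g a := by
    filter_upwards [h, isLocalMin_of_deriv_deriv_pos hpos h.deriv_eq_zero hc] with y h₁ h₂
    exact le_antisymm h₁ h₂
  have := hconst.deriv.deriv_eq
  simp only [deriv_const', deriv_const] at this
  exact hpos.ne' this

theorem ContDiff.deriv_deriv_comp_add_smul {E : Type*} [NormedAddCommGroup E] [NormedSpace ℝ E]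
    {F : E → ℝ} (hF : ContDiff ℝ 2 F) (x v : E) :
    deriv (deriv fun s : ℝ => F (x + s • v)) 0 = iteratedFDeriv ℝ 2 F x ![v, v] := by
  have hline : (fun s : ℝ => F (x + s • v)) =
      (fun y => F (x + y)) ∘ (ContinuousLinearMap.id ℝ ℝ).smulRight v := by
    ext s; simp
  have hF' : ContDiff ℝ 2 (fun y => F (x + y)) := hF.comp (contDiff_const.add contDiff_id)
  rw [← iteratedDeriv_one (f := deriv _), ← iteratedDeriv_succ', iteratedDeriv_eq_iteratedFDeriv,
    hline, ContinuousLinearMap.iteratedFDeriv_comp_right _ hF' _ le_rfl]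
  simp only [iteratedFDeriv_comp_add_left, map_zero, add_zero,
    ContinuousMultilinearMap.compContinuousLinearMap_apply, ContinuousLinearMap.smulRight_apply,
    ContinuousLinearMap.id_apply, one_smul]
  congr 1
  ext i
  fin_cases i <;> rfl

section MaximumPrinciple

variable {E : Type*} [NormedAddCommGroup E] [InnerProductSpace ℝ E]

theorem IsLocalMax.laplacian_nonpos [FiniteDimensional ℝ E] {F : E → ℝ} {x : E}
    (h : IsLocalMax F x) (hF : ContDiff ℝ 2 F) : Δ F x ≤ 0 := by
  rw [InnerProductSpace.laplacian_eq_iteratedFDeriv_stdOrthonormalBasis]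
  refine Finset.sum_nonpos fun i _ => ?_
  set v := stdOrthonormalBasis ℝ E i
  have hline : Continuous fun s : ℝ => x + s • v := by fun_prop
  have hmax : IsLocalMax (fun s : ℝ => F (x + s • v)) 0 :=
    IsLocalMax.comp_continuous (g := fun s : ℝ => x + s • v) (by simpa using h)
      hline.continuousAt
  rw [← hF.deriv_deriv_comp_add_smul]
  exact hmax.deriv_deriv_nonpos (hF.continuous.comp hline).continuousAt

theorem laplacian_norm_sq [FiniteDimensional ℝ E] (x : E) :
    Δ (fun y : E => ‖y‖ ^ 2) x = 2 * finrank ℝ E := by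
  have h : fderiv ℝ (fderiv ℝ fun y : E => ‖y‖ ^ 2) x = 2 • innerSL ℝ := by
    rw [fderiv_norm_sq, ← FunLike.coe_smul, ContinuousLinearMap.fderiv]
  have hb (i) : innerSL ℝ (stdOrthonormalBasis ℝ E i) (stdOrthonormalBasis ℝ E i) = 1 := by
    rw [innerSL_apply_apply, real_inner_self_eq_norm_sq, (stdOrthonormalBasis ℝ E).norm_eq_one,
      one_pow]
  simp [InnerProductSpace.laplacian_eq_iteratedFDeriv_stdOrthonormalBasis,
    iteratedFDeriv_two_apply, h, hb, mul_comm]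

theorem nonpos_of_strict_subsolution [FiniteDimensional ℝ E] {ψ : ℝ → E → ℝ}
    (hcont : ContinuousOn (uncurry ψ) (Ici 0 ×ˢ univ))
    (htime : ∀ x, ∀ t > 0, DifferentiableAt ℝ (fun s => ψ s x) t)
    (hspace : ∀ t > 0, ContDiff ℝ 2 (ψ t)) (hinit : ∀ x, ψ 0 x ≤ 0)
    (hfar : ∀ T > 0, ∃ R, ∀ s ∈ Icc 0 T, ∀ x, R < ‖x‖ → ψ s x ≤ 0)
    (hsub : ∀ t > 0, ∀ x, 0 < ψ t x → deriv (fun s => ψ s x) t < Δ (ψ t) x)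
    {t : ℝ} (ht : 0 ≤ t) (x : E) : ψ t x ≤ 0 := by
  rcases ht.eq_or_lt with rfl | ht
  · exact hinit x
  by_contra! hpos
  obtain ⟨R, hR⟩ := hfar t ht
  set S := Icc 0 t ×ˢ (univ : Set E)
  have htx : (t, x) ∈ S := ⟨⟨ht.le, le_rfl⟩, mem_univ x⟩
  obtain ⟨⟨s, y⟩, ⟨hs, -⟩, hmax⟩ : ∃ p ∈ S, IsMaxOn (uncurry ψ) S p := by
    refine (hcont.mono (prod_mono Icc_subset_Ici_self le_rfl)).exists_isMaxOn'
      (isClosed_Icc.prod isClosed_univ) htx ?_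
    have hK : IsCompact (Icc 0 t ×ˢ closedBall (0 : E) R) :=
      isCompact_Icc.prod (isCompact_closedBall _ _)
    filter_upwards [mem_inf_of_left hK.compl_mem_cocompact,
      mem_inf_of_right (mem_principal_self S)] with q hqK hqS
    have hq : R < ‖q.2‖ := by simpa [mem_prod, hqS.1] using hqK
    exact (hR q.1 hqS.1 q.2 hq).trans hpos.le
  have hψ : 0 < ψ s y := hpos.trans_le (hmax htx)
  have hs₀ : 0 < s := hs.1.lt_of_ne (by rintro rfl; exact (hinit y).not_gt hψ)
  have htime_nonneg : 0 ≤ deriv (fun s => ψ s y) s :=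
    IsMaxOn.deriv_nonneg_of_Icc
      (fun s' hs' => isMaxOn_iff.1 hmax (s', y) ⟨⟨hs'.1, hs'.2.trans hs.2⟩, mem_univ y⟩)
      hs₀ (htime y s hs₀)
  have hspace_nonpos : Δ (ψ s) y ≤ 0 :=
    IsLocalMax.laplacian_nonpos
      (IsMaxOn.isLocalMax (fun y' _ => isMaxOn_iff.1 hmax (s, y') ⟨hs, mem_univ y'⟩) univ_mem)
      (hspace s hs₀)
  exact (hsub s hs₀ y hψ).not_ge (hspace_nonpos.trans htime_nonneg)

/-- The factor `exp (-α s)` absorbs the zero-order term of a subsolution, and the penalty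
`ε (‖y‖² + 2 (dim E) s)`, whose heat operator vanishes, forces maxima to be attained while making
the differential inequality strict. -/
noncomputable def penalized (φ : ℝ → E → ℝ) (α ε s : ℝ) (y : E) : ℝ :=
  exp (-(α * s)) * φ s y - ε * (‖y‖ ^ 2 + 2 * finrank ℝ E * s)

variable {φ : ℝ → E → ℝ} {α ε s : ℝ} {y : E}

theorem ContinuousOn.penalized (h : ContinuousOn (uncurry φ) (Ici 0 ×ˢ univ)) :
    ContinuousOn (uncurry (penalized φ α ε)) (Ici 0 ×ˢ univ) := by
  have hexp : Continuous fun p : ℝ × E => exp (-(α * p.1)) := by fun_prop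
  have hpen : Continuous fun p : ℝ × E => ε * (‖p.2‖ ^ 2 + 2 * finrank ℝ E * p.1) := by fun_prop
  exact (hexp.continuousOn.mul h).sub hpen.continuousOn

theorem ContDiff.penalized (h : ContDiff ℝ 2 (φ s)) : ContDiff ℝ 2 (penalized φ α ε s) :=
  (contDiff_const.mul h).sub (contDiff_const.mul ((contDiff_norm_sq ℝ).add contDiff_const))

theorem hasDerivAt_penalized (h : DifferentiableAt ℝ (fun s => φ s y) s) :
    HasDerivAt (fun s => penalized φ α ε s y)
      (exp (-(α * s)) * (deriv (fun s => φ s y) s - α * φ s y) - ε * (2 * finrank ℝ E)) s := by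
  have hexp : HasDerivAt (fun s => exp (-(α * s))) (exp (-(α * s)) * -α) s := by
    simpa using ((hasDerivAt_id s).const_mul α).neg.exp
  have hpen : HasDerivAt (fun s => ε * (‖y‖ ^ 2 + 2 * finrank ℝ E * s))
      (ε * (2 * finrank ℝ E)) s := by
    simpa using
      (((hasDerivAt_id s).const_mul (2 * finrank ℝ E : ℝ)).const_add (‖y‖ ^ 2)).const_mul ε
  exact ((hexp.fun_mul h.hasDerivAt).fun_sub hpen).congr_deriv (by ring)

theorem laplacian_penalized [FiniteDimensional ℝ E] (h : ContDiff ℝ 2 (φ s)) :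
    Δ (penalized φ α ε s) y = exp (-(α * s)) * Δ (φ s) y - ε * (2 * finrank ℝ E) := by
  have hsplit : penalized φ α ε s = exp (-(α * s)) • φ s - ε • (fun y : E => ‖y‖ ^ 2)
      - fun _ => ε * (2 * finrank ℝ E * s) := by
    ext y
    simp only [penalized, Pi.sub_apply, Pi.smul_apply, smul_eq_mul]
    ring
  have hφ : ContDiffAt ℝ 2 (φ s) y := h.contDiffAt
  have hnorm : ContDiffAt ℝ 2 (fun y : E => ‖y‖ ^ 2) y := (contDiff_norm_sq ℝ).contDiffAt
  have h₁ : ContDiffAt ℝ 2 (exp (-(α * s)) • φ s) y := hφ.const_smul (exp (-(α * s)))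
  have h₂ : ContDiffAt ℝ 2 (ε • fun y : E => ‖y‖ ^ 2) y := hnorm.const_smul ε
  rw [hsplit, ContDiffAt.laplacian_sub (f₁ := exp (-(α * s)) • φ s - ε • fun y : E => ‖y‖ ^ 2)
    (h₁.sub h₂) contDiffAt_const, h₁.laplacian_sub h₂, InnerProductSpace.laplacian_smul _ hφ,
    InnerProductSpace.laplacian_smul _ hnorm, laplacian_norm_sq, InnerProductSpace.laplacian_const]
  simp

theorem penalized_nonpos_of_sqrt_lt_norm {C : ℝ} (hα : 0 ≤ α) (hε : 0 < ε) (hs : 0 ≤ s)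
    (hC : φ s y ≤ C) (hy : √(max C 0 / ε) < ‖y‖) : penalized φ α ε s y ≤ 0 := by
  have hexp : exp (-(α * s)) ≤ 1 := exp_le_one_iff.2 (by nlinarith)
  have hφ : exp (-(α * s)) * φ s y ≤ max C 0 := by
    rcases le_total (φ s y) 0 with h | h
    · exact (mul_nonpos_of_nonneg_of_nonpos (exp_pos _).le h).trans (le_max_right _ _)
    · exact (mul_le_of_le_one_left h hexp).trans (hC.trans (le_max_left _ _))
  have hy' : max C 0 < ε * ‖y‖ ^ 2 := by
    rw [← div_lt_iff₀' hε]
    exact (sqrt_lt' ((sqrt_nonneg _).trans_lt hy)).1 hy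
  have : 0 ≤ ε * (2 * finrank ℝ E * s) := by positivity
  simp only [penalized]
  nlinarith

theorem pos_of_penalized_pos (hε : 0 ≤ ε) (hs : 0 ≤ s) (h : 0 < penalized φ α ε s y) :
    0 < φ s y := by
  have : 0 ≤ ε * (‖y‖ ^ 2 + 2 * finrank ℝ E * s) := by positivity
  simp only [penalized] at h
  exact pos_of_mul_pos_right (by linarith) (exp_pos _).le

theorem deriv_penalized_lt_laplacian [FiniteDimensional ℝ E] {K : ℝ} (hKα : K < α)
    (hφ : 0 < φ s y) (htime : DifferentiableAt ℝ (fun s => φ s y) s) (hspace : ContDiff ℝ 2 (φ s))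
    (hsub : deriv (fun s => φ s y) s ≤ Δ (φ s) y + K * φ s y) :
    deriv (fun s => penalized φ α ε s y) s < Δ (penalized φ α ε s) y := by
  have hexp := mul_lt_mul_of_pos_left
    (show deriv (fun s => φ s y) s - α * φ s y < Δ (φ s) y by nlinarith)
    (exp_pos (-(α * s)))
  rw [(hasDerivAt_penalized htime).deriv, laplacian_penalized hspace]
  linarith

theorem nonpos_of_subsolution [FiniteDimensional ℝ E] {K : ℝ}
    (hcont : ContinuousOn (uncurry φ) (Ici 0 ×ˢ univ))
    (htime : ∀ x, ∀ t > 0, DifferentiableAt ℝ (fun s => φ s x) t)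
    (hspace : ∀ t > 0, ContDiff ℝ 2 (φ t)) (hinit : ∀ x, φ 0 x ≤ 0)
    (hbdd : ∀ T > 0, ∃ C, ∀ s ∈ Icc 0 T, ∀ x, φ s x ≤ C)
    (hsub : ∀ t > 0, ∀ x, 0 < φ t x → deriv (fun s => φ s x) t ≤ Δ (φ t) x + K * φ t x)
    {t : ℝ} (ht : 0 ≤ t) (x : E) : φ t x ≤ 0 := by
  set α := |K| + 1
  have hα : 0 ≤ α := by positivity
  have hpen : ∀ ε > 0, penalized φ α ε t x ≤ 0 := by
    intro ε hε
    refine nonpos_of_strict_subsolution hcont.penalized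
      (fun y s hs => (hasDerivAt_penalized (htime y s hs)).differentiableAt)
      (fun s hs => (hspace s hs).penalized) (fun y => ?_) (fun T hT => ?_)
      (fun s hs y hpos => ?_) ht x
    · simp only [penalized, mul_zero, neg_zero, exp_zero, one_mul, add_zero]
      nlinarith [hinit y, sq_nonneg ‖y‖]
    · obtain ⟨C, hC⟩ := hbdd T hT
      exact ⟨_, fun s hs y hy => penalized_nonpos_of_sqrt_lt_norm hα hε hs.1 (hC s hs y) hy⟩
    · have hφ := pos_of_penalized_pos hε.le hs.le hpos
      exact deriv_penalized_lt_laplacian (by linarith [le_abs_self K]) hφ (htime y s hs)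
        (hspace s hs) (hsub s hs y hφ)
  have hlim : Tendsto (fun ε => penalized φ α ε t x) (𝓝[>] 0) (𝓝 (exp (-(α * t)) * φ t x)) := by
    refine Continuous.tendsto' ?_ 0 _ (by simp [penalized]) |>.mono_left nhdsWithin_le_nhds
    unfold penalized
    fun_prop
  exact nonpos_of_mul_nonpos_right (le_of_tendsto hlim (eventually_nhdsWithin_of_forall hpen))
    (exp_pos _)

end MaximumPrinciple

theorem map_add_le_add_of_antitoneOn_div {g : ℝ → ℝ} (h₀ : 0 ≤ g 0)
    (hg : AntitoneOn (fun z => g z / z) (Ioi 0)) {a b : ℝ} (ha : 0 ≤ a) (hb : 0 ≤ b) :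
    g (a + b) ≤ g a + g b := by
  rcases ha.eq_or_lt with rfl | ha
  · simpa using h₀
  rcases hb.eq_or_lt with rfl | hb
  · simpa using h₀
  have hab : 0 < a + b := add_pos ha hb
  have h₁ : g (a + b) / (a + b) ≤ g a / a := hg ha hab (by linarith)
  have h₂ : g (a + b) / (a + b) ≤ g b / b := hg hb hab (by linarith)
  calc g (a + b) = a * (g (a + b) / (a + b)) + b * (g (a + b) / (a + b)) := by field_simp
    _ ≤ a * (g a / a) + b * (g b / b) := by gcongr
    _ = g a + g b := by field_simp

section Euclidean

variable {N : ℕ}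

theorem ContDiff.laplacian_eq {F : EuclideanSpace ℝ (Fin N) → ℝ} (hF : ContDiff ℝ 2 F) :
    laplacian F = Δ F := by
  ext x
  rw [InnerProductSpace.laplacian_eq_iteratedFDeriv_orthonormalBasis F
    (EuclideanSpace.basisFun (Fin N) ℝ)]
  simp only [laplacian, EuclideanSpace.basisFun_apply, iteratedFDeriv_two_apply]
  refine Finset.sum_congr rfl fun i _ => ?_
  have hd : DifferentiableAt ℝ (fderiv ℝ F) x :=
    (hF.fderiv_right (m := 1) le_rfl).differentiable one_ne_zero x
  rw [fderiv_clm_apply hd (differentiableAt_const _)]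
  simp

theorem laplacian_comp_add_right (F : EuclideanSpace ℝ (Fin N) → ℝ)
    (ξ x : EuclideanSpace ℝ (Fin N)) :
    laplacian (fun y => F (y + ξ)) x = laplacian F (x + ξ) := by
  simp only [laplacian, fderiv_comp_add_right]
  exact Finset.sum_congr rfl fun i _ => by
    rw [fderiv_comp_add_right (f := fun z => fderiv ℝ F z (EuclideanSpace.single i 1))]

variable {f : ℝ → ℝ → ℝ}

theorem IsClassicalSolution.comp_add_right {w : ℝ → EuclideanSpace ℝ (Fin N) → ℝ}
    {w₀ : EuclideanSpace ℝ (Fin N) → ℝ} (hw : IsClassicalSolution f w w₀)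
    (ξ : EuclideanSpace ℝ (Fin N)) :
    IsClassicalSolution f (fun t x => w t (x + ξ)) (fun x => w₀ (x + ξ)) where
  cont := hw.cont.comp (f := fun p : ℝ × EuclideanSpace ℝ (Fin N) => (p.1, p.2 + ξ))
    (by fun_prop) fun _ hp => ⟨hp.1, mem_univ _⟩
  bounded T hT :=
    let ⟨C, hC⟩ := hw.bounded T hT
    ⟨C, fun t ht x => hC t ht (x + ξ)⟩
  time_diff x t ht := hw.time_diff (x + ξ) t ht
  space_smooth t ht := (hw.space_smooth t ht).comp (contDiff_id.add contDiff_const)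
  eqn t ht x := by rw [laplacian_comp_add_right]; exact hw.eqn t ht (x + ξ)
  init := by simp only [hw.init]

theorem IsClassicalSolution.deriv_sub_sub_le {K : ℝ≥0} (hK : ∀ t > 0, LipschitzWith K (f t))
    (hf_add : ∀ t > 0, ∀ a ≥ 0, ∀ b ≥ 0, f t (a + b) ≤ f t a + f t b)
    {u v w : ℝ → EuclideanSpace ℝ (Fin N) → ℝ} {u₀ v₀ w₀ : EuclideanSpace ℝ (Fin N) → ℝ}
    (hu : IsClassicalSolution f u u₀) (hv : IsClassicalSolution f v v₀)
    (hw : IsClassicalSolution f w w₀) {s : ℝ} (hs : 0 < s) {y : EuclideanSpace ℝ (Fin N)}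
    (hv_nonneg : 0 ≤ v s y) (hw_nonneg : 0 ≤ w s y) (hpos : 0 < u s y - v s y - w s y) :
    deriv (fun s => u s y - v s y - w s y) s
      ≤ Δ (u s - v s - w s) y + K * (u s y - v s y - w s y) := by
  have hderiv : deriv (fun s => u s y - v s y - w s y) s
      = deriv (fun s => u s y) s - deriv (fun s => v s y) s - deriv (fun s => w s y) s :=
    (((hu.time_diff y s hs).hasDerivAt.fun_sub (hv.time_diff y s hs).hasDerivAt).fun_sub
      (hw.time_diff y s hs).hasDerivAt).deriv
  have hlap : Δ (u s - v s - w s) y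
      = laplacian (u s) y - laplacian (v s) y - laplacian (w s) y := by
    have hu' := hu.space_smooth s hs
    have hv' := hv.space_smooth s hs
    have hw' := hw.space_smooth s hs
    rw [hu'.laplacian_eq, hv'.laplacian_eq, hw'.laplacian_eq,
      ContDiffAt.laplacian_sub (f₁ := u s - v s) (hu'.sub hv').contDiffAt hw'.contDiffAt,
      hu'.contDiffAt.laplacian_sub hv'.contDiffAt]
  have hsubadd := hf_add s hs _ hv_nonneg _ hw_nonneg
  have hlip : f s (u s y) - f s (v s y + w s y) ≤ K * (u s y - v s y - w s y) := by
    have := (hK s hs).dist_le_mul (u s y) (v s y + w s y)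
    rw [Real.dist_eq, Real.dist_eq, abs_of_pos (show 0 < u s y - (v s y + w s y) by linarith)]
      at this
    linarith [le_abs_self (f s (u s y) - f s (v s y + w s y))]
  rw [hderiv, hlap, hu.eqn s hs, hv.eqn s hs, hw.eqn s hs]
  linarith

theorem IsClassicalSolution.le_add {K : ℝ≥0} (hK : ∀ t > 0, LipschitzWith K (f t))
    (hf_add : ∀ t > 0, ∀ a ≥ 0, ∀ b ≥ 0, f t (a + b) ≤ f t a + f t b)
    {u v w : ℝ → EuclideanSpace ℝ (Fin N) → ℝ} {u₀ v₀ w₀ : EuclideanSpace ℝ (Fin N) → ℝ}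
    (hu : IsClassicalSolution f u u₀) (hv : IsClassicalSolution f v v₀)
    (hw : IsClassicalSolution f w w₀) (h₀ : ∀ x, u₀ x ≤ v₀ x + w₀ x)
    (hv_nonneg : ∀ t ≥ 0, ∀ x, 0 ≤ v t x) (hw_nonneg : ∀ t ≥ 0, ∀ x, 0 ≤ w t x)
    {t : ℝ} (ht : 0 ≤ t) (x : EuclideanSpace ℝ (Fin N)) : u t x ≤ v t x + w t x := by
  have hbdd (T : ℝ) (hT : 0 < T) : ∃ C, ∀ s ∈ Icc 0 T, ∀ y, u s y - v s y - w s y ≤ C := by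
    obtain ⟨Cu, hCu⟩ := hu.bounded T hT
    obtain ⟨Cv, hCv⟩ := hv.bounded T hT
    obtain ⟨Cw, hCw⟩ := hw.bounded T hT
    refine ⟨Cu + Cv + Cw, fun s hs y => ?_⟩
    linarith [(abs_le.1 (hCu s hs y)).2, (abs_le.1 (hCv s hs y)).1, (abs_le.1 (hCw s hs y)).1]
  have hφ := nonpos_of_subsolution (φ := fun t => u t - v t - w t) (K := K)
    ((hu.cont.sub hv.cont).sub hw.cont)
    (fun x t ht => ((hu.time_diff x t ht).sub (hv.time_diff x t ht)).sub (hw.time_diff x t ht))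
    (fun t ht => ((hu.space_smooth t ht).sub (hv.space_smooth t ht)).sub (hw.space_smooth t ht))
    (fun x => by simp only [hu.init, hv.init, hw.init, Pi.sub_apply]; linarith [h₀ x]) hbdd
    (fun s hs y hpos => hu.deriv_sub_sub_le hK hf_add hv hw hs (hv_nonneg s hs.le y)
      (hw_nonneg s hs.le y) hpos) ht x
  simp only [Pi.sub_apply] at hφ
  linarith

end Euclidean

theorem le_of_ball_subset_slab {E : Type*} [NormedAddCommGroup E] [InnerProductSpace ℝ E]
    {x₀ η : E} {r L : ℝ} (hL : 0 ≤ L) (hη : ‖η‖ = 1)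
    (h : ball x₀ r ⊆ {x | |inner ℝ x η| < L}) : r ≤ L := by
  by_contra! hr
  have hmem (σ : ℝ) (hσ : |σ| = 1) : |inner ℝ x₀ η + σ * L| < L := by
    have : x₀ + (σ * L) • η ∈ ball x₀ r := by
      rw [mem_ball, dist_self_add_left, norm_smul, hη, Real.norm_eq_abs, abs_mul, hσ,
        abs_of_nonneg hL]
      simpa using hr
    simpa [inner_add_left, real_inner_smul_left, real_inner_self_eq_norm_sq, hη] using h this
  have hup := (abs_lt.1 (hmem 1 abs_one)).2
  have hlow := (abs_lt.1 (hmem (-1) (by simp))).1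
  linarith

theorem innerRadius_le_of_upperLevelSet_subset_slab {N : ℕ}
    {u : ℝ → EuclideanSpace ℝ (Fin N) → ℝ} {θ t L : ℝ} {η : EuclideanSpace ℝ (Fin N)}
    (hL : 0 ≤ L) (hη : ‖η‖ = 1) (h : upperLevelSet u θ t ⊆ {x | |inner ℝ x η| < L}) :
    innerRadius u θ t ≤ L :=
  Real.sSup_le (fun _ ⟨_, hball⟩ => le_of_ball_subset_slab hL hη fun x hx => h (hball x hx)) hL

theorem upperLevelSet_in_slab_orthogonal_direction_general
    {N : ℕ} (f : ℝ → ℝ → ℝ) (hf : StandingAssumptions f)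
    (Z : ℝ) (hKPP : HypKPP f Z)
    (w₀ : EuclideanSpace ℝ (Fin N) → ℝ)
    (ξ : EuclideanSpace ℝ (Fin N))
    (w : ℝ → EuclideanSpace ℝ (Fin N) → ℝ) (hw : IsClassicalSolution f w w₀)
    (hwnn : ∀ s ≥ (0:ℝ), ∀ x, 0 ≤ w s x)
    (u : ℝ → EuclideanSpace ℝ (Fin N) → ℝ)
    (hu : IsClassicalSolution f u (fun x => w₀ x + w₀ (x + ξ)))
    (t θ L : ℝ) (ht : 0 < t) (hL : 0 < L)
    (η : EuclideanSpace ℝ (Fin N)) (hη : ‖η‖ = 1) (hηξ : inner ℝ η ξ = 0)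
    (hwt : ∀ x : EuclideanSpace ℝ (Fin N), L ≤ ‖x‖ → w t x ≤ θ / 2) :
    upperLevelSet u θ t ⊆ {x : EuclideanSpace ℝ (Fin N) | |inner ℝ x η| < L} ∧
    innerRadius u θ t ≤ L := by
  obtain ⟨K, hK⟩ := hf.2.1
  have hcomp (x) : u t x ≤ w t x + w t (x + ξ) :=
    hu.le_add hK (fun s hs a ha b hb => map_add_le_add_of_antitoneOn_div (hf.2.2 s hs).ge
      (hKPP.2.2 s hs) ha hb) hw (hw.comp_add_right ξ) (fun _ => le_rfl) hwnn
      (fun s hs y => hwnn s hs (y + ξ)) ht.le x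
  have hnorm (y : EuclideanSpace ℝ (Fin N)) (hy : L ≤ |inner ℝ y η|) : L ≤ ‖y‖ := by
    simpa [hη] using hy.trans (abs_real_inner_le_norm y η)
  have hslab : upperLevelSet u θ t ⊆ {x | |inner ℝ x η| < L} := by
    intro x hx
    by_contra hfar
    replace hfar : L ≤ |inner ℝ x η| := not_lt.1 hfar
    have hshift : inner ℝ (x + ξ) η = inner ℝ x η := by
      rw [inner_add_left, real_inner_comm η ξ, hηξ, add_zero]
    have := hwt x (hnorm x hfar)
    have := hwt (x + ξ) (hnorm _ (hshift ▸ hfar))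
    exact (show θ < u t x from hx).not_ge (by linarith [hcomp x])
  exact ⟨hslab, innerRadius_le_of_upperLevelSet_subset_slab hL.le hη hslab⟩

/-- Under the KPP hypothesis, let `w` be the solution with datum `w₀` and
`u` the solution with datum `w₀(x) + w₀(x+ξ)`.  If `η` is a unit vector orthogonal to
`ξ` and `w(t,·) ≤ θ/2` outside the centered ball of radius `L`, then the upper level set
`U_θ(t)` of `u` lies in the slab `{|x·η| < L}` and hence `ℛⁱ_θ(t) ≤ L`. -/
theorem upperLevelSet_in_slab_orthogonal_direction
    {N : ℕ} (hN : 2 ≤ N) (f : ℝ → ℝ → ℝ) (hf : StandingAssumptions f)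
    (Z : ℝ) (hKPP : HypKPP f Z)
    (w₀ : EuclideanSpace ℝ (Fin N) → ℝ)
    (hw₀nn : ∀ x, 0 ≤ w₀ x) (hw₀cont : Continuous w₀)
    (hw₀supp : HasCompactSupport w₀) (hw₀ne : w₀ ≠ 0)
    (ξ : EuclideanSpace ℝ (Fin N)) (hξ : ξ ≠ 0)
    (w : ℝ → EuclideanSpace ℝ (Fin N) → ℝ) (hw : IsClassicalSolution f w w₀)
    (hwnn : ∀ s ≥ (0:ℝ), ∀ x, 0 ≤ w s x)
    (u : ℝ → EuclideanSpace ℝ (Fin N) → ℝ)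
    (hu : IsClassicalSolution f u (fun x => w₀ x + w₀ (x + ξ)))
    (t θ L : ℝ) (ht : 0 < t) (hθ : 0 < θ) (hθZ : θ < Z) (hL : 0 < L)
    (η : EuclideanSpace ℝ (Fin N)) (hη : ‖η‖ = 1) (hηξ : inner ℝ η ξ = 0)
    (hwt : ∀ x : EuclideanSpace ℝ (Fin N), L ≤ ‖x‖ → w t x ≤ θ / 2) :
    upperLevelSet u θ t ⊆ {x : EuclideanSpace ℝ (Fin N) | |inner ℝ x η| < L} ∧
    innerRadius u θ t ≤ L :=
  upperLevelSet_in_slab_orthogonal_direction_general f hf Z hKPP w₀ ξ w hw hwnn u hu t θ L ht hL η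
    hη hηξ hwt
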